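/- arXiv:2509.10138 — 2 statements merged into one kernel-verified Lean document; each statement's English description precedes it below -/
import Mathlib

section
/- Let β₂ be a satisfiable finite set of atomic comparisons over V and let D₁, …, Dₖ be finite nonempty sets of ACs over V. If β₂ entails the disjunction ⋁ᵢ (⋀ Dᵢ), then there exists i such that β₂ entails every equality AC occurring in Dᵢ, i.e., every member of Dᵢ of the form X = Y (for variables X, Y) or X = c (for a variable X and real constant c). -/
namespace QC

/-- A term is a variable in `V` or a real constant. -/
inductive Term (V : Type) where
  | var : V → Term V
  | const : ℝ → Term V

/-- The comparison relations `<, ≤, =, ≠`. -/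
inductive Rel where
  | lt | le | eq | ne

/-- A comparison between two terms.  (`x ≥ c` is represented as `c ≤ x`, etc.) -/
structure Comp (V : Type) where
  rel : Rel
  lhs : Term V
  rhs : Term V

def Term.eval {V : Type} (σ : V → ℝ) : Term V → ℝ
  | .var x => σ x
  | .const c => c

def Rel.holds : Rel → ℝ → ℝ → Prop
  | .lt => fun a b => a < b
  | .le => fun a b => a ≤ b
  | .eq => fun a b => a = b
  | .ne => fun a b => a ≠ b

/-- An assignment `σ : V → ℝ` satisfies a comparison. -/
def Comp.holds {V : Type} (a : Comp V) (σ : V → ℝ) : Prop :=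
  a.rel.holds (a.lhs.eval σ) (a.rhs.eval σ)

def Term.isVar {V : Type} : Term V → Prop
  | .var _ => True
  | .const _ => False

/-- An atomic comparison: at least one side is a variable. -/
def IsAC {V : Type} (a : Comp V) : Prop := a.lhs.isVar ∨ a.rhs.isVar

/-- `σ` satisfies every comparison in the finite set `F`. -/
def Sat {V : Type} (F : Finset (Comp V)) (σ : V → ℝ) : Prop := ∀ a ∈ F, a.holds σ

/-!
Suppose every `Dᵢ` contained an equation `aᵢ` violated by some model `σᵢ` of `β₂`. Along the
segment between two models of `β₂`, the comparisons `<`, `≤`, `=` of `β₂` keep holding and each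
`≠` fails at most at one point, while an equation violated at an endpoint holds at most at one
point. So points close to the first endpoint are again models of `β₂` and violate every equation
violated at either endpoint. Folding the `σᵢ` together this way yields a model of `β₂` violating
every `aᵢ`, hence satisfying no `Dᵢ`, against the entailment.
-/

open AffineMap Filter Finset Topology

lemma eventually_lineMap_ne {x x' y y' : ℝ} (h : x ≠ x' ∨ y ≠ y') :
    ∀ᶠ t in 𝓝[>] (0 : ℝ), lineMap x y t ≠ lineMap x' y' t := by
  by_cases hx : x = x'
  · subst hx
    filter_upwards [self_mem_nhdsWithin] with t (ht : 0 < t)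
    simpa [lineMap_apply_module, ht.ne'] using h
  · have hcont : ContinuousAt (fun t : ℝ => lineMap x y t - lineMap x' y' t) 0 := by
      simp only [lineMap_apply_ring]
      fun_prop
    have hne : ∀ᶠ t in 𝓝 (0 : ℝ), lineMap x y t - lineMap x' y' t ≠ 0 :=
      hcont.eventually_ne (by simpa [sub_eq_zero] using hx)
    filter_upwards [nhdsWithin_le_nhds hne] with t ht
    exact sub_ne_zero.1 ht

section

variable {V : Type}

lemma Term.eval_lineMap (u : Term V) (σ σ' : V → ℝ) (t : ℝ) :
    u.eval (lineMap σ σ' t) = lineMap (u.eval σ) (u.eval σ') t := by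
  cases u <;> simp [Term.eval, pi_lineMap_apply]

lemma Comp.eventually_holds_lineMap {a : Comp V} {σ σ' : V → ℝ} (hσ : a.holds σ)
    (hσ' : a.holds σ') : ∀ᶠ t in 𝓝[>] (0 : ℝ), a.holds (lineMap σ σ' t) := by
  have hunit : ∀ᶠ t in 𝓝[>] (0 : ℝ), t ∈ Set.Ioo 0 1 := Ioo_mem_nhdsGT one_pos
  unfold Comp.holds at *
  simp only [Term.eval_lineMap]
  cases hrel : a.rel <;> rw [hrel] at hσ hσ' <;> simp only [Rel.holds] at hσ hσ' ⊢
  · filter_upwards [hunit] with t ht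
    exact lineMap_strict_mono_endpoints hσ hσ' ht.1.le ht.2.le
  · filter_upwards [hunit] with t ht
    exact lineMap_mono_endpoints hσ hσ' ht.1.le ht.2.le
  · simp [hσ, hσ']
  · exact eventually_lineMap_ne (.inl hσ)

lemma Comp.eventually_not_holds_lineMap {a : Comp V} {σ σ' : V → ℝ} (heq : a.rel = .eq)
    (h : ¬a.holds σ ∨ ¬a.holds σ') : ∀ᶠ t in 𝓝[>] (0 : ℝ), ¬a.holds (lineMap σ σ' t) := by
  simp only [Comp.holds, heq, Rel.holds, Term.eval_lineMap] at h ⊢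
  exact eventually_lineMap_ne h

lemma Sat.exists_sat_forall_not_holds {F : Finset (Comp V)} {σ σ' : V → ℝ} (hσ : Sat F σ)
    (hσ' : Sat F σ') (T : Finset (Comp V))
    (hT : ∀ a ∈ T, a.rel = .eq ∧ (¬a.holds σ ∨ ¬a.holds σ')) :
    ∃ τ, Sat F τ ∧ ∀ a ∈ T, ¬a.holds τ := by
  have hF : ∀ᶠ t in 𝓝[>] (0 : ℝ), Sat F (lineMap σ σ' t) :=
    (eventually_all_finset F).2 fun a ha => Comp.eventually_holds_lineMap (hσ a ha) (hσ' a ha)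
  have hT : ∀ᶠ t in 𝓝[>] (0 : ℝ), ∀ a ∈ T, ¬a.holds (lineMap σ σ' t) :=
    (eventually_all_finset T).2 fun a ha => (hT a ha).elim Comp.eventually_not_holds_lineMap
  obtain ⟨t, ht⟩ := (hF.and hT).exists
  exact ⟨_, ht⟩

lemma exists_sat_forall_not_holds {F : Finset (Comp V)} (hsat : ∃ σ, Sat F σ)
    (T : Finset (Comp V)) (hT : ∀ a ∈ T, a.rel = .eq ∧ ∃ σ, Sat F σ ∧ ¬a.holds σ) :
    ∃ τ, Sat F τ ∧ ∀ a ∈ T, ¬a.holds τ := by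
  classical
  induction T using Finset.induction_on with
  | empty => simpa using hsat
  | insert b T _ ih =>
    obtain ⟨τ, hτ, hτT⟩ := ih fun a ha => hT a (mem_insert_of_mem ha)
    obtain ⟨-, σ, hσ, hbσ⟩ := hT b (mem_insert_self b T)
    refine hτ.exists_sat_forall_not_holds hσ _ fun a ha => ⟨(hT a ha).1, ?_⟩
    rcases mem_insert.1 ha with rfl | ha
    · exact .inr hbσ
    · exact .inl (hτT a ha)

end

theorem stmt12_general {V : Type} (β₂ : Finset (Comp V))
    (hsat : ∃ σ : V → ℝ, Sat β₂ σ)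
    (k : ℕ) (D : Fin k → Finset (Comp V))
    (hent : ∀ σ : V → ℝ, Sat β₂ σ → ∃ i, ∀ a ∈ D i, a.holds σ) :
    ∃ i, ∀ a ∈ D i,
      ((∃ X Y : V, a = ⟨Rel.eq, Term.var X, Term.var Y⟩) ∨
        (∃ (X : V) (c : ℝ), a = ⟨Rel.eq, Term.var X, Term.const c⟩)) →
      ∀ σ : V → ℝ, Sat β₂ σ → a.holds σ := by
  classical
  by_contra! hcon
  choose a ha hform hviol using hcon
  have hrel : ∀ i, (a i).rel = .eq := fun i => by
    rcases hform i with ⟨_, _, h⟩ | ⟨_, _, h⟩ <;> rw [h]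
  obtain ⟨τ, hτ, hτa⟩ := exists_sat_forall_not_holds hsat (univ.image a) (by
    simpa using fun i => ⟨hrel i, hviol i⟩)
  obtain ⟨i, hi⟩ := hent τ hτ
  exact hτa (a i) (mem_image_of_mem a (mem_univ i)) (hi (a i) (ha i))

/-- lem-eq-directly: if a satisfiable `β₂` entails `⋁ᵢ (⋀ Dᵢ)`,
then for some `i` every equality AC in `Dᵢ` (of the form `X = Y` or `X = c`) is
entailed by `β₂`. -/
theorem stmt12 {V : Type} (β₂ : Finset (Comp V))
    (hAC : ∀ a ∈ β₂, IsAC a)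
    (hsat : ∃ σ : V → ℝ, Sat β₂ σ)
    (k : ℕ) (D : Fin k → Finset (Comp V))
    (hDne : ∀ i, (D i).Nonempty)
    (hDAC : ∀ i, ∀ a ∈ D i, IsAC a)
    (hent : ∀ σ : V → ℝ, Sat β₂ σ → ∃ i, ∀ a ∈ D i, a.holds σ) :
    ∃ i, ∀ a ∈ D i,
      ((∃ X Y : V, a = ⟨Rel.eq, Term.var X, Term.var Y⟩) ∨
        (∃ (X : V) (c : ℝ), a = ⟨Rel.eq, Term.var X, Term.const c⟩)) →
      ∀ σ : V → ℝ, Sat β₂ σ → a.holds σ :=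
  stmt12_general β₂ hsat k D hent

end QC
end

section
/- Let β₂ be a satisfiable finite set of atomic comparisons over V, let c₀ be a real constant, and let Y₁, …, Yₖ be variables in V. If every assignment satisfying β₂ satisfies Yᵢ = c₀ for at least one i, then there exists a single i such that every assignment satisfying β₂ satisfies Yᵢ = c₀. -/
/-!
Let `S` be the set of assignments satisfying `β₂`. On the segment between two points of `S`,
each comparison of `β₂` fails for at most one parameter in `[0, 1]`: `<`, `≤` and `=` are
preserved by convex combinations, and `u ≠ v` fails only where the affine function `u - v`
vanishes, which it does not at the endpoint. A hyperplane `Y = c₀` likewise meets such a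
segment at most once unless it contains both endpoints. Hence if for each `i` some point of `S`
avoids `Yᵢ = c₀`, combining these points one at a time along segments, at a parameter outside
finitely many bad ones, gives a single point of `S` avoiding every `Yᵢ = c₀`.
-/

namespace QC

open AffineMap Set

theorem subsingleton_setOf_lineMap_eq {k E : Type*} [Field k] [AddCommGroup E] [Module k E]
    {a b c : E} (h : a ≠ c ∨ b ≠ c) : {t : k | lineMap a b t = c}.Subsingleton := by
  rcases eq_or_ne a b with rfl | hab
  · have hac : a ≠ c := h.elim id id
    simp [hac]
  · exact fun s hs t ht => lineMap_injective k hab (hs.trans ht.symm)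

theorem Term.eval_lineMap_s13 {V : Type} (σ τ : V → ℝ) (t : ℝ) (T : Term V) :
    T.eval (lineMap σ τ t) = lineMap (T.eval σ) (T.eval τ) t := by
  cases T <;> simp [Term.eval, pi_lineMap_apply]

theorem Comp.subsingleton_setOf_not_holds_lineMap {V : Type} {a : Comp V} {σ τ : V → ℝ}
    (hσ : a.holds σ) (hτ : a.holds τ) :
    {t ∈ Icc (0 : ℝ) 1 | ¬ a.holds (lineMap σ τ t)}.Subsingleton := by
  rcases a with ⟨_ | _ | _ | _, L, R⟩ <;>
    simp only [Comp.holds, Rel.holds, Term.eval_lineMap_s13] at hσ hτ ⊢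
  · refine subsingleton_empty.anti fun t ⟨⟨h₀, h₁⟩, ht⟩ => ht ?_
    exact lineMap_strict_mono_endpoints hσ hτ h₀ h₁
  · refine subsingleton_empty.anti fun t ⟨⟨h₀, h₁⟩, ht⟩ => ht ?_
    exact lineMap_mono_endpoints hσ hτ h₀ h₁
  · refine subsingleton_empty.anti fun t ⟨_, ht⟩ => ht ?_
    rw [hσ, hτ]
  · refine (subsingleton_setOf_lineMap_eq (b := L.eval τ - R.eval τ) (c := 0)
      (Or.inl (sub_ne_zero.mpr hσ))).anti fun t ⟨_, ht⟩ => ?_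
    rw [mem_ofPred_eq, ← vsub_eq_sub, ← vsub_eq_sub, ← lineMap_vsub_lineMap, vsub_eq_sub]
    exact sub_eq_zero.mpr (not_not.mp ht)

def AlmostConvex {E : Type*} [AddCommGroup E] [Module ℝ E] (S : Set E) : Prop :=
  ∀ σ ∈ S, ∀ τ ∈ S, {t ∈ Icc (0 : ℝ) 1 | lineMap σ τ t ∉ S}.Finite

theorem almostConvex_setOf_sat {V : Type} (F : Finset (Comp V)) :
    AlmostConvex {σ | Sat F σ} := by
  intro σ hσ τ hτ
  refine (F.finite_toSet.biUnion fun a ha =>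
    (Comp.subsingleton_setOf_not_holds_lineMap (hσ a ha) (hτ a ha)).finite).subset ?_
  rintro t ⟨ht, hnot⟩
  obtain ⟨a, ha, hna⟩ : ∃ a ∈ F, ¬ a.holds (lineMap σ τ t) := by
    simpa [Sat] using hnot
  exact mem_biUnion ha ⟨ht, hna⟩

theorem AlmostConvex.exists_forall_apply_ne {E ι : Type*} [AddCommGroup E] [Module ℝ E]
    {S : Set E} (hS : AlmostConvex S) (hne : S.Nonempty) (f : ι → E →ᵃ[ℝ] ℝ) (c : ℝ)
    (s : Finset ι) (h : ∀ i ∈ s, ∃ τ ∈ S, f i τ ≠ c) : ∃ ρ ∈ S, ∀ i ∈ s, f i ρ ≠ c := by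
  classical
  induction s using Finset.induction_on with
  | empty => exact let ⟨ρ, hρ⟩ := hne; ⟨ρ, hρ, by simp⟩
  | insert j s _ ih =>
    obtain ⟨ρ, hρS, hρ⟩ := ih fun i hi => h i (Finset.mem_insert_of_mem hi)
    obtain ⟨τ, hτS, hτ⟩ := h j (Finset.mem_insert_self j s)
    have hbad : ({t ∈ Icc (0 : ℝ) 1 | lineMap ρ τ t ∉ S} ∪
        ⋃ i ∈ insert j s, {t : ℝ | lineMap (f i ρ) (f i τ) t = c}).Finite := by
      refine (hS ρ hρS τ hτS).union ((Finset.finite_toSet _).biUnion fun i hi => ?_)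
      refine (subsingleton_setOf_lineMap_eq ?_).finite
      rcases Finset.mem_insert.mp hi with rfl | hi
      exacts [Or.inr hτ, Or.inl (hρ i hi)]
    obtain ⟨t, ht, hgood⟩ := ((Icc_infinite zero_lt_one).sdiff hbad).nonempty
    refine ⟨lineMap ρ τ t, by_contra fun hS' => hgood (Or.inl ⟨ht, hS'⟩), fun i hi hc => ?_⟩
    exact hgood (Or.inr (mem_biUnion (x := i) hi (by simpa using hc)))

theorem stmt13_general {V : Type} (β₂ : Finset (Comp V))
    (hsat : ∃ σ : V → ℝ, Sat β₂ σ)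
    (c₀ : ℝ) (k : ℕ) (Y : Fin k → V)
    (hent : ∀ σ : V → ℝ, Sat β₂ σ → ∃ i, σ (Y i) = c₀) :
    ∃ i, ∀ σ : V → ℝ, Sat β₂ σ → σ (Y i) = c₀ := by
  by_contra! hnone
  obtain ⟨ρ, hρ, hne⟩ := (almostConvex_setOf_sat β₂).exists_forall_apply_ne hsat
    (fun i => proj (Y i)) c₀ Finset.univ fun i _ => hnone i
  obtain ⟨i, hi⟩ := hent ρ hρ
  exact hne i (Finset.mem_univ i) hi

/-- if a satisfiable `β₂` entails the disjunction of the equalities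
`Yᵢ = c₀`, then it entails a single one of them. -/
theorem stmt13 {V : Type} (β₂ : Finset (Comp V))
    (hAC : ∀ a ∈ β₂, IsAC a)
    (hsat : ∃ σ : V → ℝ, Sat β₂ σ)
    (c₀ : ℝ) (k : ℕ) (Y : Fin k → V)
    (hent : ∀ σ : V → ℝ, Sat β₂ σ → ∃ i, σ (Y i) = c₀) :
    ∃ i, ∀ σ : V → ℝ, Sat β₂ σ → σ (Y i) = c₀ :=
  stmt13_general β₂ hsat c₀ k Y hent

end QC
end
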